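/- Let λ be a nonzero complex number and β ∈ ℂ[y]. If β(0) ≠ 0, then a subspace of Ψ_hv(λ,β) is a submodule if and only if it equals R_g^hv for some g ∈ ℂ[y]. If β(0) = 0, then a subspace of Ψ_hv(λ,β) is a submodule if and only if it equals R_g^hv or S_g^hv for some g ∈ ℂ[y]. In all cases S_g^hv ⊆ R_g^hv ⊆ R_ĝ^hv whenever ĝ divides g. -/

import Mathlib

open Polynomial

noncomputable section

/-- `ℂ[x,y]`, realized as polynomials in an outer variable `x` (= `X`) with coefficients in
`ℂ[y]`; the inner variable `y` is `C X`.  The same type also models `ℂ[s,t]`. -/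
abbrev P2 : Type := Polynomial (Polynomial ℂ)

/-- the polynomial `x` -/
def xP : P2 := Polynomial.X

/-- the polynomial `y` -/
def yP : P2 := Polynomial.C Polynomial.X

/-- multiplication by a fixed polynomial, as a `ℂ`-linear operator on `ℂ[x,y]` -/
def mulOp (a : P2) : P2 →ₗ[ℂ] P2 := LinearMap.mulLeft ℂ a

/-- the substitution `f(x,y) ↦ f(x+c,y)`, as a `ℂ`-linear operator on `ℂ[x,y]` -/
def shiftOp (c : ℂ) : P2 →ₗ[ℂ] P2 :=
  (Polynomial.taylor (Polynomial.C c)).restrictScalars ℂ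

/-- `f(x,y) ↦ λ^m (x + m β(y)) f(x+m, y)` -/
def genL (lam : ℂ) (β : Polynomial ℂ) (m : ℤ) : P2 →ₗ[ℂ] P2 :=
  lam ^ m • (mulOp (xP + Polynomial.C ((m : ℂ) • β)) ∘ₗ shiftOp (m : ℂ))

/-- `f(x,y) ↦ λ^m y f(x+m, y)` -/
def genH (lam : ℂ) (m : ℤ) : P2 →ₗ[ℂ] P2 :=
  lam ^ m • (mulOp yP ∘ₗ shiftOp (m : ℂ))

/- In everything that follows, the odd (half-integer) index `p ∈ ℤ + 1/2` is encoded by the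
integer `k : ℤ` with `p = k + 1/2`. -/

/-- `L_m` on the even part `ℂ[x,y]` of `Ω(λ,β)` -/
def omegaLe (lam : ℂ) (β : Polynomial ℂ) (m : ℤ) : P2 →ₗ[ℂ] P2 := genL lam β m

/-- `L_m` on the odd part `ℂ[s,t]` of `Ω(λ,β)` -/
def omegaLo (lam : ℂ) (β : Polynomial ℂ) (m : ℤ) : P2 →ₗ[ℂ] P2 :=
  genL lam (β + Polynomial.C (1/2)) m

/-- `H_m` on either part of `Ω(λ,β)` -/
def omegaH (lam : ℂ) (m : ℤ) : P2 →ₗ[ℂ] P2 := genH lam m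

/-- `G_{k+1/2} : M₀ → M₁`, `f(x,y) ↦ λ^{p-1/2} f(s+p,t)` -/
def omegaGe (lam : ℂ) (k : ℤ) : P2 →ₗ[ℂ] P2 := lam ^ k • shiftOp ((k : ℂ) + 1/2)

/-- `G_{k+1/2} : M₁ → M₀`, `f(s,t) ↦ λ^{p+1/2} (x + 2p β(y)) f(x+p,y)` -/
def omegaGo (lam : ℂ) (β : Polynomial ℂ) (k : ℤ) : P2 →ₗ[ℂ] P2 :=
  lam ^ (k + 1) • (mulOp (xP + Polynomial.C (((2*k+1 : ℤ) : ℂ) • β)) ∘ₗ shiftOp ((k : ℂ) + 1/2))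

/-- `Q_{k+1/2} : M₀ → M₁` is the zero map -/
def omegaQe (_k : ℤ) : P2 →ₗ[ℂ] P2 := 0

/-- `Q_{k+1/2} : M₁ → M₀`, `f(s,t) ↦ λ^{p+1/2} y f(x+p,y)` -/
def omegaQo (lam : ℂ) (k : ℤ) : P2 →ₗ[ℂ] P2 :=
  lam ^ (k + 1) • (mulOp yP ∘ₗ shiftOp ((k : ℂ) + 1/2))

/-- A representation of the N=1 Heisenberg-Virasoro superalgebra `𝔤` on the `ℤ₂`-graded
complex vector space `M₀ ⊕ M₁`: operators `Le m`/`Lo m` (resp. `He`/`Ho`) are the even/odd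
components of `L_m` (resp. `H_m`), and `Ge k`/`Go k` (resp. `Qe`/`Qo`) are the two components
of the grading-reversing operator `G_{k+1/2}` (resp. `Q_{k+1/2}`); all ten super-bracket
relations are required to hold on both graded components. -/
structure GRep (M₀ M₁ : Type*) [AddCommGroup M₀] [Module ℂ M₀]
    [AddCommGroup M₁] [Module ℂ M₁] where
  Le : ℤ → M₀ →ₗ[ℂ] M₀
  Lo : ℤ → M₁ →ₗ[ℂ] M₁
  He : ℤ → M₀ →ₗ[ℂ] M₀
  Ho : ℤ → M₁ →ₗ[ℂ] M₁
  Ge : ℤ → M₀ →ₗ[ℂ] M₁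
  Go : ℤ → M₁ →ₗ[ℂ] M₀
  Qe : ℤ → M₀ →ₗ[ℂ] M₁
  Qo : ℤ → M₁ →ₗ[ℂ] M₀
  rel_LL_e : ∀ m n : ℤ, Le m ∘ₗ Le n - Le n ∘ₗ Le m = ((m : ℂ) - (n : ℂ)) • Le (m + n)
  rel_LL_o : ∀ m n : ℤ, Lo m ∘ₗ Lo n - Lo n ∘ₗ Lo m = ((m : ℂ) - (n : ℂ)) • Lo (m + n)
  rel_LH_e : ∀ m n : ℤ, Le m ∘ₗ He n - He n ∘ₗ Le m = (-(n : ℂ)) • He (m + n)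
  rel_LH_o : ∀ m n : ℤ, Lo m ∘ₗ Ho n - Ho n ∘ₗ Lo m = (-(n : ℂ)) • Ho (m + n)
  rel_LG_e : ∀ (m k : ℤ),
    Lo m ∘ₗ Ge k - Ge k ∘ₗ Le m = ((m : ℂ)/2 - ((k : ℂ) + 1/2)) • Ge (m + k)
  rel_LG_o : ∀ (m k : ℤ),
    Le m ∘ₗ Go k - Go k ∘ₗ Lo m = ((m : ℂ)/2 - ((k : ℂ) + 1/2)) • Go (m + k)
  rel_LQ_e : ∀ (m k : ℤ),
    Lo m ∘ₗ Qe k - Qe k ∘ₗ Le m = (-((m : ℂ)/2 + ((k : ℂ) + 1/2))) • Qe (m + k)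
  rel_LQ_o : ∀ (m k : ℤ),
    Le m ∘ₗ Qo k - Qo k ∘ₗ Lo m = (-((m : ℂ)/2 + ((k : ℂ) + 1/2))) • Qo (m + k)
  rel_HG_e : ∀ (m k : ℤ), Ho m ∘ₗ Ge k - Ge k ∘ₗ He m = (m : ℂ) • Qe (m + k)
  rel_HG_o : ∀ (m k : ℤ), He m ∘ₗ Go k - Go k ∘ₗ Ho m = (m : ℂ) • Qo (m + k)
  rel_GG_e : ∀ k l : ℤ, Go k ∘ₗ Ge l + Go l ∘ₗ Ge k = (2 : ℂ) • Le (k + l + 1)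
  rel_GG_o : ∀ k l : ℤ, Ge k ∘ₗ Go l + Ge l ∘ₗ Go k = (2 : ℂ) • Lo (k + l + 1)
  rel_GQ_e : ∀ k l : ℤ, Go k ∘ₗ Qe l + Qo l ∘ₗ Ge k = He (k + l + 1)
  rel_GQ_o : ∀ k l : ℤ, Ge k ∘ₗ Qo l + Qe l ∘ₗ Go k = Ho (k + l + 1)
  rel_HH_e : ∀ m n : ℤ, He m ∘ₗ He n = He n ∘ₗ He m
  rel_HH_o : ∀ m n : ℤ, Ho m ∘ₗ Ho n = Ho n ∘ₗ Ho m
  rel_HQ_e : ∀ (m k : ℤ), Ho m ∘ₗ Qe k = Qe k ∘ₗ He m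
  rel_HQ_o : ∀ (m k : ℤ), He m ∘ₗ Qo k = Qo k ∘ₗ Ho m
  rel_QQ_e : ∀ k l : ℤ, Qo k ∘ₗ Qe l + Qo l ∘ₗ Qe k = 0
  rel_QQ_o : ∀ k l : ℤ, Qe k ∘ₗ Qo l + Qe l ∘ₗ Qo k = 0

/-- evaluation of a two-variable polynomial (an element of `P2`, outer variable ↦ `A`,
inner variable ↦ `B`) at a pair of commuting operators -/
def eval2End {V : Type*} [AddCommGroup V] [Module ℂ V] (A B : Module.End ℂ V)
    (f : P2) : Module.End ℂ V :=
  Polynomial.eval₂ (Polynomial.aeval B).toRingHom A f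

/-- multiplication by a fixed polynomial on `ℂ[x]` -/
def mul1 (a : Polynomial ℂ) : Polynomial ℂ →ₗ[ℂ] Polynomial ℂ := LinearMap.mulLeft ℂ a

/-- the substitution `f(x) ↦ f(x+c)` on `ℂ[x]` -/
def tay (c : ℂ) : Polynomial ℂ →ₗ[ℂ] Polynomial ℂ := Polynomial.taylor c

/-- `f(x) ↦ λ^m (x + m c) f(x+m)` -/
def phiL (lam c : ℂ) (m : ℤ) : Polynomial ℂ →ₗ[ℂ] Polynomial ℂ :=
  lam ^ m • (mul1 (Polynomial.X + Polynomial.C ((m : ℂ) * c)) ∘ₗ tay (m : ℂ))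

/-- `f(x) ↦ λ^m b f(x+m)` -/
def phiH (lam b : ℂ) (m : ℤ) : Polynomial ℂ →ₗ[ℂ] Polynomial ℂ :=
  (lam ^ m * b) • tay (m : ℂ)

/-- `f(x) ↦ λ^{p-1/2} f(s+p)`, `p = k + 1/2` -/
def phiGe (lam : ℂ) (k : ℤ) : Polynomial ℂ →ₗ[ℂ] Polynomial ℂ :=
  lam ^ k • tay ((k : ℂ) + 1/2)

/-- `f(s) ↦ λ^{p+1/2} (x + 2 p c) f(x+p)`, `p = k + 1/2` -/
def phiGo (lam c : ℂ) (k : ℤ) : Polynomial ℂ →ₗ[ℂ] Polynomial ℂ :=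
  lam ^ (k + 1) • (mul1 (Polynomial.X + Polynomial.C (((2*k+1 : ℤ) : ℂ) * c)) ∘ₗ tay ((k : ℂ) + 1/2))

/-- `f(s) ↦ λ^{p+1/2} b f(x+p)`, `p = k + 1/2` -/
def phiQo (lam b : ℂ) (k : ℤ) : Polynomial ℂ →ₗ[ℂ] Polynomial ℂ :=
  (lam ^ (k + 1) * b) • tay ((k : ℂ) + 1/2)

/-- one graded component of `R_g`, i.e. `g(y)ℂ[x,y]` (equivalently `g(t)ℂ[s,t]`) -/
def Rg (g : Polynomial ℂ) : Submodule ℂ P2 := LinearMap.range (mulOp (Polynomial.C g))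

/-- the even component of `S_g`, i.e. `g(y)(xℂ[x,y] + yℂ[x,y])` -/
def Sg (g : Polynomial ℂ) : Submodule ℂ P2 :=
  LinearMap.range (mulOp (xP * Polynomial.C g)) ⊔ LinearMap.range (mulOp (yP * Polynomial.C g))

/-- the embedding `ℂ[x] → ℂ[x,y]` -/
def embX (f : Polynomial ℂ) : P2 := f.map Polynomial.C

/-- `f(x) ↦` class of `g'(y)·f(x)` in `ℂ[x,y]/R_g` -/
def psiMap (g g' : Polynomial ℂ) (f : Polynomial ℂ) : P2 ⧸ Rg g :=
  (Rg g).mkQ (Polynomial.C g' * embX f)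


/-- a subspace of `Ψ_hv(λ,β) = ℂ[x,y]` invariant under all `L_m` and `H_m` -/
def IsHvSub (lam : ℂ) (β : Polynomial ℂ) (F : Submodule ℂ P2) : Prop :=
  (∀ m : ℤ, ∀ f ∈ F, genL lam β m f ∈ F) ∧ (∀ m : ℤ, ∀ f ∈ F, genH lam m f ∈ F)


namespace Stmt12Aux

open Finset

variable {V : Type*} [AddCommGroup V] [Module ℂ V]

lemma mat_extract (F : Submodule ℂ V) {n : ℕ} (A : Matrix (Fin n) (Fin n) ℂ)
    (hA : IsUnit A.det) (w : Fin n → V) (h : ∀ i, (∑ j, A i j • w j) ∈ F) :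
    ∀ j, w j ∈ F := by
  intro j
  have key : (∑ i, A⁻¹ j i • ∑ l, A i l • w l) = w j := by
    have h1 : ∀ i : Fin n, A⁻¹ j i • ∑ l, A i l • w l = ∑ l, (A⁻¹ j i * A i l) • w l := by
      intro i
      rw [Finset.smul_sum]
      simp_rw [smul_smul]
    simp_rw [h1]
    rw [Finset.sum_comm]
    have h2 : ∀ l : Fin n, (∑ i, (A⁻¹ j i * A i l) • w l) = ((A⁻¹ * A) j l) • w l := by
      intro l
      rw [← Finset.sum_smul, Matrix.mul_apply]
    simp_rw [h2, Matrix.nonsing_inv_mul A hA]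
    simp [Matrix.one_apply]
  rw [← key]
  exact Submodule.sum_mem _ fun i _ => Submodule.smul_mem _ _ (h i)

lemma fin_nodes_det {N : ℕ} :
    IsUnit (Matrix.vandermonde (fun i : Fin N => ((i : ℕ) : ℂ))).det := by
  rw [isUnit_iff_ne_zero, Matrix.det_vandermonde_ne_zero_iff]
  intro a b hab
  exact Fin.ext (Nat.cast_injective hab)

lemma vand_col (F : Submodule ℂ V) (N : ℕ) (w : ℕ → V)
    (h : ∀ m : ℕ, (∑ j ∈ Finset.range N, ((m : ℂ)) ^ j • w j) ∈ F) :
    ∀ j < N, w j ∈ F := by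
  have key := mat_extract F _ (fin_nodes_det (N := N)) (fun j : Fin N => w j) ?_
  · intro j hj
    exact key ⟨j, hj⟩
  · intro i
    have h2 := h i
    rw [← Fin.sum_univ_eq_sum_range (fun j => ((i : ℕ) : ℂ) ^ j • w j) N] at h2
    simpa [Matrix.vandermonde_apply] using h2

lemma vand_row (F : Submodule ℂ V) (N : ℕ) (w : ℕ → V)
    (h : ∀ j : ℕ, (∑ m ∈ Finset.range N, ((m : ℂ)) ^ j • w m) ∈ F) :
    ∀ m < N, w m ∈ F := by
  have hdet : IsUnit ((Matrix.vandermonde (fun i : Fin N => ((i : ℕ) : ℂ))).transpose).det := by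
    rw [Matrix.det_transpose]
    exact fin_nodes_det
  have key := mat_extract F _ hdet (fun m : Fin N => w m) ?_
  · intro m hm
    exact key ⟨m, hm⟩
  · intro i
    have h2 := h (i : ℕ)
    rw [← Fin.sum_univ_eq_sum_range (fun m => ((m : ℕ) : ℂ) ^ (i : ℕ) • w m) N] at h2
    simpa [Matrix.transpose_apply, Matrix.vandermonde_apply] using h2

lemma taylor_sum {R : Type*} [CommRing R] (r : R) (f : R[X]) (N : ℕ)
    (hN : f.natDegree < N) :
    Polynomial.taylor r f = ∑ k ∈ Finset.range N, r ^ k • Polynomial.hasseDeriv k f := by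
  ext i
  rw [Polynomial.taylor_coeff, Polynomial.finset_sum_coeff]
  have hdeg : (Polynomial.hasseDeriv i f).natDegree < N :=
    lt_of_le_of_lt ((Polynomial.natDegree_hasseDeriv_le f i).trans (Nat.sub_le _ _)) hN
  rw [Polynomial.eval_eq_sum_range' hdeg]
  apply Finset.sum_congr rfl
  intro k _
  rw [Polynomial.coeff_smul, Polynomial.hasseDeriv_coeff, Polynomial.hasseDeriv_coeff,
    smul_eq_mul]
  have hsym : (k + i).choose i = (k + i).choose k := by
    have h2 := Nat.choose_symm (n := k + i) (k := k) (Nat.le_add_right k i)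
    rwa [Nat.add_sub_cancel_left] at h2
  rw [hsym, add_comm i k]
  ring

lemma csmul (c : ℂ) (p : P2) : c • p = Polynomial.C (Polynomial.C c) * p := by
  rw [← algebraMap_smul (Polynomial ℂ) c p, Polynomial.algebraMap_eq, Polynomial.smul_eq_C_mul]

lemma cpow_smul (c : ℂ) (k : ℕ) (p : P2) :
    ((Polynomial.C c : Polynomial ℂ) ^ k) • p = (c ^ k) • p := by
  rw [← map_pow, ← Polynomial.algebraMap_eq, algebraMap_smul]

lemma mulOp_apply (a p : P2) : mulOp a p = a * p := rfl

lemma genL_apply (lam : ℂ) (β : Polynomial ℂ) (m : ℤ) (f : P2) :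
    genL lam β m f =
      lam ^ m • ((xP + Polynomial.C ((m : ℂ) • β)) *
        Polynomial.taylor (Polynomial.C (m : ℂ)) f) := rfl

lemma genH_apply (lam : ℂ) (m : ℤ) (f : P2) :
    genH lam m f = lam ^ m • (yP * Polynomial.taylor (Polynomial.C (m : ℂ)) f) := rfl

lemma mem_Rg {g : Polynomial ℂ} {p : P2} : p ∈ Rg g ↔ Polynomial.C g ∣ p := by
  rw [Rg, LinearMap.mem_range]
  constructor
  · rintro ⟨q, rfl⟩
    exact ⟨q, (mulOp_apply _ _).symm⟩
  · rintro ⟨q, rfl⟩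
    exact ⟨q, mulOp_apply _ _⟩

lemma mem_Sg {g : Polynomial ℂ} {p : P2} :
    p ∈ Sg g ↔ ∃ a b : P2, xP * Polynomial.C g * a + yP * Polynomial.C g * b = p := by
  rw [Sg, Submodule.mem_sup]
  constructor
  · rintro ⟨u, hu, v, hv, rfl⟩
    rw [LinearMap.mem_range] at hu hv
    obtain ⟨a, rfl⟩ := hu
    obtain ⟨b, rfl⟩ := hv
    exact ⟨a, b, by rw [mulOp_apply, mulOp_apply]⟩
  · rintro ⟨a, b, rfl⟩
    exact ⟨mulOp _ a, LinearMap.mem_range.mpr ⟨a, rfl⟩, mulOp _ b,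
      LinearMap.mem_range.mpr ⟨b, rfl⟩, by rw [mulOp_apply, mulOp_apply]⟩

lemma xmul_deriv_monomial (i : ℕ) (c : Polynomial ℂ) :
    xP * Polynomial.derivative (Polynomial.monomial i c : P2)
      = ((i : ℂ)) • (Polynomial.monomial i c : P2) := by
  cases i with
  | zero => simp [Polynomial.derivative_monomial, xP]
  | succ i =>
    rw [Polynomial.derivative_monomial, Nat.add_sub_cancel]
    simp only [xP]
    rw [Polynomial.X_mul_monomial, csmul, Polynomial.C_mul_monomial]
    congr 1
    rw [Polynomial.C_eq_natCast]
    push_cast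
    ring

lemma Rg_hvSub (lam : ℂ) (β : Polynomial ℂ) (g : Polynomial ℂ) : IsHvSub lam β (Rg g) := by
  constructor <;> intro m f hf <;> rw [mem_Rg] at hf ⊢ <;> obtain ⟨q, rfl⟩ := hf
  · rw [genL_apply]
    have ht : Polynomial.taylor (Polynomial.C ((m : ℤ) : ℂ)) (Polynomial.C g * q)
        = Polynomial.C g * Polynomial.taylor (Polynomial.C ((m : ℤ) : ℂ)) q := by
      rw [← Polynomial.smul_eq_C_mul, map_smul, Polynomial.smul_eq_C_mul]
    rw [ht, csmul]
    exact Dvd.dvd.mul_left (Dvd.dvd.mul_left (dvd_mul_right _ _) _) _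
  · rw [genH_apply]
    have ht : Polynomial.taylor (Polynomial.C ((m : ℤ) : ℂ)) (Polynomial.C g * q)
        = Polynomial.C g * Polynomial.taylor (Polynomial.C ((m : ℤ) : ℂ)) q := by
      rw [← Polynomial.smul_eq_C_mul, map_smul, Polynomial.smul_eq_C_mul]
    rw [ht, csmul]
    exact Dvd.dvd.mul_left (Dvd.dvd.mul_left (dvd_mul_right _ _) _) _

lemma Sg_hvSub (lam : ℂ) (β : Polynomial ℂ) (g : Polynomial ℂ)
    (hβ : (Polynomial.X : Polynomial ℂ) ∣ β) : IsHvSub lam β (Sg g) := by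
  obtain ⟨β1, hβ1⟩ := hβ
  constructor <;> intro m f hf <;> obtain ⟨a, b, rfl⟩ := mem_Sg.mp hf
  · rw [genL_apply, mem_Sg]
    have ht : Polynomial.taylor (Polynomial.C ((m : ℤ) : ℂ))
          (xP * Polynomial.C g * a + yP * Polynomial.C g * b)
        = Polynomial.C g *
          ((xP + Polynomial.C (Polynomial.C ((m : ℤ) : ℂ))) *
              Polynomial.taylor (Polynomial.C ((m : ℤ) : ℂ)) a
            + yP * Polynomial.taylor (Polynomial.C ((m : ℤ) : ℂ)) b) := by
      simp only [map_add, Polynomial.taylor_mul, Polynomial.taylor_X, Polynomial.taylor_C,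
        xP, yP]
      ring
    have hβ2 : (Polynomial.C (((m : ℤ) : ℂ) • β) : P2)
        = yP * Polynomial.C (Polynomial.C ((m : ℤ) : ℂ) * β1) := by
      rw [Polynomial.smul_eq_C_mul, hβ1]
      simp only [yP, map_mul]
      ring
    refine ⟨lam ^ m •
        ((xP + Polynomial.C (Polynomial.C ((m : ℤ) : ℂ))) *
            Polynomial.taylor (Polynomial.C ((m : ℤ) : ℂ)) a
          + yP * Polynomial.taylor (Polynomial.C ((m : ℤ) : ℂ)) b),
      lam ^ m • (Polynomial.C (Polynomial.C ((m : ℤ) : ℂ) * β1) *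
        ((xP + Polynomial.C (Polynomial.C ((m : ℤ) : ℂ))) *
            Polynomial.taylor (Polynomial.C ((m : ℤ) : ℂ)) a
          + yP * Polynomial.taylor (Polynomial.C ((m : ℤ) : ℂ)) b)), ?_⟩
    rw [ht, hβ2, mul_smul_comm, mul_smul_comm, ← smul_add]
    congr 1
    ring
  · rw [genH_apply, mem_Sg]
    have ht : Polynomial.taylor (Polynomial.C ((m : ℤ) : ℂ))
          (xP * Polynomial.C g * a + yP * Polynomial.C g * b)
        = Polynomial.C g *
          ((xP + Polynomial.C (Polynomial.C ((m : ℤ) : ℂ))) *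
              Polynomial.taylor (Polynomial.C ((m : ℤ) : ℂ)) a
            + yP * Polynomial.taylor (Polynomial.C ((m : ℤ) : ℂ)) b) := by
      simp only [map_add, Polynomial.taylor_mul, Polynomial.taylor_X, Polynomial.taylor_C,
        xP, yP]
      ring
    refine ⟨0, lam ^ m •
        ((xP + Polynomial.C (Polynomial.C ((m : ℤ) : ℂ))) *
            Polynomial.taylor (Polynomial.C ((m : ℤ) : ℂ)) a
          + yP * Polynomial.taylor (Polynomial.C ((m : ℤ) : ℂ)) b), ?_⟩
    rw [ht, mul_zero, zero_add, mul_smul_comm]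
    congr 1
    ring

lemma classify (lam : ℂ) (hlam : lam ≠ 0) (β : Polynomial ℂ) (F : Submodule ℂ P2)
    (hF : IsHvSub lam β F) :
    ∃ g : Polynomial ℂ, F = Rg g ∨ ((Polynomial.X : Polynomial ℂ) ∣ β ∧ F = Sg g) := by
  obtain ⟨hL0, hH0⟩ := hF
  -- normalized invariance
  have hLn : ∀ m : ℕ, ∀ f ∈ F,
      (xP + Polynomial.C ((m : ℂ) • β)) * Polynomial.taylor (Polynomial.C ((m : ℕ) : ℂ)) f ∈ F := by
    intro m f hf
    have h1 := hL0 (m : ℤ) f hf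
    rw [genL_apply] at h1
    have h2 := F.smul_mem (lam ^ (m : ℤ))⁻¹ h1
    rw [smul_smul, inv_mul_cancel₀ (zpow_ne_zero _ hlam), one_smul] at h2
    simpa using h2
  have hHn : ∀ m : ℕ, ∀ f ∈ F,
      yP * Polynomial.taylor (Polynomial.C ((m : ℕ) : ℂ)) f ∈ F := by
    intro m f hf
    have h1 := hH0 (m : ℤ) f hf
    rw [genH_apply] at h1
    have h2 := F.smul_mem (lam ^ (m : ℤ))⁻¹ h1
    rw [smul_smul, inv_mul_cancel₀ (zpow_ne_zero _ hlam), one_smul] at h2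
    simpa using h2
  -- hasse-derivative invariance from L
  have hLhasse : ∀ f ∈ F, ∀ j : ℕ,
      xP * Polynomial.hasseDeriv (j + 1) f + Polynomial.C β * Polynomial.hasseDeriv j f ∈ F := by
    intro f hf j
    by_cases hj : f.natDegree < j
    · have e1 : Polynomial.hasseDeriv (j+1) f = 0 :=
        Polynomial.hasseDeriv_eq_zero_of_lt_natDegree f _ (by omega)
      have e2 : Polynomial.hasseDeriv j f = 0 :=
        Polynomial.hasseDeriv_eq_zero_of_lt_natDegree f _ hj
      simp [e1, e2]
    · set D := f.natDegree with hD
      let w : ℕ → P2 := fun i =>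
        match i with
        | 0 => xP * f
        | (i+1) => xP * Polynomial.hasseDeriv (i+1) f + Polynomial.C β * Polynomial.hasseDeriv i f
      have hw0 : w 0 = xP * f := rfl
      have hwS : ∀ i, w (i+1)
          = xP * Polynomial.hasseDeriv (i+1) f + Polynomial.C β * Polynomial.hasseDeriv i f :=
        fun i => rfl
      have hsum : ∀ m : ℕ, (∑ i ∈ Finset.range (D+1+1), ((m : ℂ)) ^ i • w i) ∈ F := by
        intro m
        have hz : Polynomial.hasseDeriv (D+1) f = 0 :=
          Polynomial.hasseDeriv_eq_zero_of_lt_natDegree f _ (Nat.lt_succ_self D)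
        have hT := taylor_sum (Polynomial.C ((m : ℕ) : ℂ)) f (D+1) (Nat.lt_succ_self _)
        have hCsm : (Polynomial.C (((m : ℕ) : ℂ) • β) : P2)
            = ((m : ℕ) : ℂ) • (Polynomial.C β : P2) := by
          rw [Polynomial.smul_eq_C_mul, map_mul, ← csmul]
        have hsplit : (xP + Polynomial.C (((m : ℕ) : ℂ) • β)) *
              Polynomial.taylor (Polynomial.C ((m : ℕ) : ℂ)) f
            = (∑ k ∈ Finset.range (D+1), ((m : ℂ)) ^ k • (xP * Polynomial.hasseDeriv k f))
              + ∑ k ∈ Finset.range (D+1),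
                  ((m : ℂ)) ^ (k+1) • (Polynomial.C β * Polynomial.hasseDeriv k f) := by
          rw [hT, add_mul, Finset.mul_sum, Finset.mul_sum]
          congr 1
          · exact Finset.sum_congr rfl fun k _ => by rw [cpow_smul, mul_smul_comm]
          · refine Finset.sum_congr rfl fun k _ => ?_
            rw [cpow_smul, mul_smul_comm, hCsm, smul_mul_assoc, smul_smul, ← pow_succ]
        have hxsum : (∑ k ∈ Finset.range (D+1), ((m : ℂ)) ^ k • (xP * Polynomial.hasseDeriv k f))
            = (∑ i ∈ Finset.range (D+1),
                ((m : ℂ)) ^ (i+1) • (xP * Polynomial.hasseDeriv (i+1) f)) + xP * f := by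
          rw [Finset.sum_range_succ', Finset.sum_range_succ, hz]
          simp [Polynomial.hasseDeriv_zero']
        have key : (∑ i ∈ Finset.range (D+1+1), ((m : ℂ)) ^ i • w i)
            = (xP + Polynomial.C (((m : ℕ) : ℂ) • β)) *
                Polynomial.taylor (Polynomial.C ((m : ℕ) : ℂ)) f := by
          rw [hsplit, hxsum, Finset.sum_range_succ']
          simp only [hwS, hw0, smul_add, Finset.sum_add_distrib, pow_zero, one_smul]
          abel
        rw [key]
        exact hLn m f hf
      have hres := vand_col F (D+1+1) w hsum (j+1) (by omega)
      rwa [hwS] at hres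
  -- hasse-derivative invariance from H
  have hHhasse : ∀ f ∈ F, ∀ j : ℕ, yP * Polynomial.hasseDeriv j f ∈ F := by
    intro f hf j
    by_cases hj : f.natDegree < j
    · simp [Polynomial.hasseDeriv_eq_zero_of_lt_natDegree f _ hj]
    · set D := f.natDegree with hD
      have hsum : ∀ m : ℕ,
          (∑ i ∈ Finset.range (D+1), ((m : ℂ)) ^ i • (yP * Polynomial.hasseDeriv i f)) ∈ F := by
        intro m
        have hT := taylor_sum (Polynomial.C ((m : ℕ) : ℂ)) f (D+1) (Nat.lt_succ_self _)
        have key : (∑ i ∈ Finset.range (D+1), ((m : ℂ)) ^ i • (yP * Polynomial.hasseDeriv i f))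
            = yP * Polynomial.taylor (Polynomial.C ((m : ℕ) : ℂ)) f := by
          rw [hT, Finset.mul_sum]
          exact (Finset.sum_congr rfl fun k _ => by rw [cpow_smul, mul_smul_comm]).symm
        rw [key]
        exact hHn m f hf
      exact vand_col F (D+1) _ hsum j (by omega)
  -- F is an ideal
  have hxF : ∀ f ∈ F, xP * f ∈ F := by
    intro f hf
    have h1 := hLn 0 f hf
    simpa using h1
  have hyF : ∀ f ∈ F, yP * f ∈ F := by
    intro f hf
    have h1 := hHn 0 f hf
    simpa using h1
  have hyiF : ∀ i : ℕ, ∀ f ∈ F, (yP ^ i) * f ∈ F := by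
    intro i
    induction i with
    | zero => intro f hf; simpa using hf
    | succ i ih =>
      intro f hf
      have h2 := hyF _ (ih f hf)
      rwa [show yP * (yP ^ i * f) = yP ^ (i+1) * f by ring] at h2
  have hCF : ∀ (a : Polynomial ℂ), ∀ f ∈ F, Polynomial.C a * f ∈ F := by
    intro a
    induction a using Polynomial.induction_on' with
    | add p q hp hq =>
      intro f hf
      rw [map_add, add_mul]
      exact F.add_mem (hp f hf) (hq f hf)
    | monomial i c =>
      intro f hf
      have h1 : (Polynomial.C ((Polynomial.monomial i) c) : P2) * f = c • (yP ^ i * f) := by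
        rw [csmul, ← Polynomial.C_mul_X_pow_eq_monomial, map_mul, map_pow]
        simp only [yP]
        ring
      rw [h1]
      exact F.smul_mem c (hyiF i f hf)
  have hmulF : ∀ (p : P2), ∀ f ∈ F, p * f ∈ F := by
    have hxiF : ∀ i : ℕ, ∀ f ∈ F, (xP ^ i) * f ∈ F := by
      intro i
      induction i with
      | zero => intro f hf; simpa using hf
      | succ i ih =>
        intro f hf
        have h2 := hxF _ (ih f hf)
        rwa [show xP * (xP ^ i * f) = xP ^ (i+1) * f by ring] at h2
    intro p
    induction p using Polynomial.induction_on' with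
    | add p q hp hq =>
      intro f hf
      rw [add_mul]
      exact F.add_mem (hp f hf) (hq f hf)
    | monomial n a =>
      intro f hf
      have h1 : (Polynomial.monomial n a : P2) * f = Polynomial.C a * (xP ^ n * f) := by
        rw [← Polynomial.C_mul_X_pow_eq_monomial]
        simp only [xP]
        ring
      rw [h1]
      exact hCF a _ (hxiF n f hf)
  -- monomial components of members
  have hxD : ∀ f ∈ F, xP * Polynomial.derivative f ∈ F := by
    intro f hf
    have h1 := hLhasse f hf 0
    simp only [zero_add, Polynomial.hasseDeriv_one', Polynomial.hasseDeriv_zero'] at h1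
    have h2 := hCF β f hf
    have h3 := F.sub_mem h1 h2
    simpa using h3
  have hmono : ∀ f ∈ F, ∀ n : ℕ, (Polynomial.monomial n (f.coeff n) : P2) ∈ F := by
    intro f hf n
    by_cases hn : f.natDegree < n
    · rw [Polynomial.coeff_eq_zero_of_natDegree_lt hn, map_zero]
      exact F.zero_mem
    · set D := f.natDegree with hD
      have key : ∀ j : ℕ,
          (∑ i ∈ Finset.range (D+1), ((i : ℂ)) ^ j • (Polynomial.monomial i (f.coeff i) : P2)) ∈ F := by
        intro j
        induction j with
        | zero =>
          simp only [pow_zero, one_smul]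
          rw [← Polynomial.as_sum_range' f (D+1) (Nat.lt_succ_self _)]
          exact hf
        | succ j ih =>
          have h2 := hxD _ ih
          have h3 : xP * Polynomial.derivative
                (∑ i ∈ Finset.range (D+1), ((i : ℂ)) ^ j • (Polynomial.monomial i (f.coeff i) : P2))
              = ∑ i ∈ Finset.range (D+1),
                  ((i : ℂ)) ^ (j+1) • (Polynomial.monomial i (f.coeff i) : P2) := by
            rw [map_sum, Finset.mul_sum]
            refine Finset.sum_congr rfl fun i _ => ?_
            rw [Polynomial.derivative_smul, mul_smul_comm, xmul_deriv_monomial, smul_smul,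
              ← pow_succ]
          rwa [h3] at h2
      exact vand_row F (D+1) _ key n (by omega)
  -- the ideals J n
  let J : ℕ → Ideal (Polynomial ℂ) := fun n =>
    { carrier := {a | (Polynomial.monomial n a : P2) ∈ F}
      add_mem' := fun ha hb => by
        simp only [Set.mem_setOf_eq] at *
        rw [map_add]
        exact F.add_mem ha hb
      zero_mem' := by
        simp only [Set.mem_setOf_eq, map_zero]
        exact F.zero_mem
      smul_mem' := fun c a ha => by
        simp only [Set.mem_setOf_eq, smul_eq_mul] at *
        rw [← Polynomial.C_mul_monomial]
        exact hCF c _ ha }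
  have hJmem : ∀ n a, a ∈ J n ↔ (Polynomial.monomial n a : P2) ∈ F := fun n a => Iff.rfl
  have hup : ∀ n a, a ∈ J n → a ∈ J (n+1) := by
    intro n a ha
    have h2 := hxF _ ((hJmem n a).mp ha)
    rw [show xP * Polynomial.monomial n a = Polynomial.monomial (n+1) a by
      simp only [xP, Polynomial.X_mul_monomial]] at h2
    exact (hJmem _ _).mpr h2
  have hβJ : ∀ n a, a ∈ J n → β * a ∈ J 0 := by
    intro n a ha
    have h1 := hLhasse (Polynomial.monomial n a) ((hJmem n a).mp ha) n
    rw [Polynomial.hasseDeriv_monomial, Polynomial.hasseDeriv_monomial,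
      Nat.choose_eq_zero_of_lt (Nat.lt_succ_self n), Nat.choose_self, Nat.sub_self] at h1
    simp only [Nat.cast_zero, zero_mul, Polynomial.monomial_zero_right, mul_zero, zero_add,
      Nat.cast_one, one_mul] at h1
    rw [Polynomial.C_mul_monomial] at h1
    exact (hJmem 0 _).mpr h1
  have hdiag : ∀ n a, a ∈ J (n+1) → a ∈ J 1 := by
    intro n a ha
    have h1 := hLhasse (Polynomial.monomial (n+1) a) ((hJmem _ a).mp ha) n
    rw [Polynomial.hasseDeriv_monomial, Polynomial.hasseDeriv_monomial, Nat.choose_self,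
      Nat.choose_succ_self_right, Nat.sub_self, Nat.add_sub_cancel_left] at h1
    simp only [Nat.cast_one, one_mul] at h1
    rw [Polynomial.C_mul_monomial] at h1
    rw [show xP * Polynomial.monomial 0 a = Polynomial.monomial 1 a by
      simp only [xP, Polynomial.X_mul_monomial, zero_add]] at h1
    rw [← map_add] at h1
    have h2 : a + β * (((n+1 : ℕ) : Polynomial ℂ) * a) ∈ J 1 := (hJmem 1 _).mpr h1
    have h3 : β * a ∈ J 1 := hup 0 _ (hβJ (n+1) a ha)
    have h4 : ((n+1 : ℕ) : Polynomial ℂ) * (β * a) ∈ J 1 := Ideal.mul_mem_left _ _ h3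
    have h5 := (J 1).sub_mem h2 h4
    rwa [show a + β * (((n+1 : ℕ) : Polynomial ℂ) * a)
      - ((n+1 : ℕ) : Polynomial ℂ) * (β * a) = a by ring] at h5
  have hyJ : ∀ a ∈ J 1, Polynomial.X * a ∈ J 0 := by
    intro a ha
    have h1 := hHhasse (Polynomial.monomial 1 a) ((hJmem 1 a).mp ha) 1
    rw [Polynomial.hasseDeriv_monomial, Nat.choose_self, Nat.sub_self] at h1
    simp only [Nat.cast_one, one_mul] at h1
    rw [show yP * Polynomial.monomial 0 a = Polynomial.monomial 0 (Polynomial.X * a) by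
      simp only [yP]; rw [Polynomial.monomial_zero_left, Polynomial.monomial_zero_left,
        ← map_mul]] at h1
    exact (hJmem 0 _).mpr h1
  have hcoeffJ : ∀ f ∈ F, ∀ n : ℕ, f.coeff n ∈ J n := fun f hf n =>
    (hJmem _ _).mpr (hmono f hf n)
  have hJle1 : ∀ n, J n ≤ J 1 := by
    intro n
    cases n with
    | zero => exact fun a ha => hup 0 a ha
    | succ n => exact fun a ha => hdiag n a ha
  obtain ⟨g, hg⟩ := Submodule.IsPrincipal.principal (J 1)
  rw [Ideal.submodule_span_eq] at hg
  have hgJ1 : g ∈ J 1 := by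
    rw [hg]
    exact Ideal.subset_span (Set.mem_singleton _)
  have hdvd : ∀ f ∈ F, Polynomial.C g ∣ f := by
    intro f hf
    rw [Polynomial.C_dvd_iff_dvd_coeff]
    intro i
    have h2 := hJle1 i (hcoeffJ f hf i)
    rwa [hg, Ideal.mem_span_singleton] at h2
  by_cases hcase : J 0 = J 1
  · refine ⟨g, Or.inl ?_⟩
    apply le_antisymm
    · intro f hf
      exact mem_Rg.mpr (hdvd f hf)
    · intro p hp
      obtain ⟨c, rfl⟩ := mem_Rg.mp hp
      have hCg : (Polynomial.C g : P2) ∈ F := by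
        have h2 : g ∈ J 0 := by rw [hcase]; exact hgJ1
        have h3 := (hJmem 0 g).mp h2
        rwa [Polynomial.monomial_zero_left] at h3
      have h4 := hmulF c _ hCg
      rwa [mul_comm] at h4
  · have hg0 : g ≠ 0 := by
      rintro rfl
      apply hcase
      have hbot : J 1 = ⊥ := by
        rw [hg]
        exact Ideal.span_singleton_eq_bot.mpr rfl
      exact le_antisymm (fun a ha => hup 0 a ha) (hbot ▸ bot_le)
    obtain ⟨h0, hh0⟩ := Submodule.IsPrincipal.principal (J 0)
    rw [Ideal.submodule_span_eq] at hh0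
    have hh0J0 : h0 ∈ J 0 := by
      rw [hh0]
      exact Ideal.subset_span (Set.mem_singleton _)
    have hgh0 : g ∣ h0 := by
      have h2 : h0 ∈ J 1 := hup 0 h0 hh0J0
      rwa [hg, Ideal.mem_span_singleton] at h2
    have hXg : Polynomial.X * g ∈ J 0 := hyJ g hgJ1
    have hh0Xg : h0 ∣ Polynomial.X * g := by
      rwa [hh0, Ideal.mem_span_singleton] at hXg
    obtain ⟨d, hd⟩ := hgh0
    have hdX : d ∣ Polynomial.X := by
      apply (mul_dvd_mul_iff_left hg0).mp
      rw [← hd]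
      rwa [mul_comm g Polynomial.X]
    obtain ⟨e, he⟩ := hdX
    rcases Polynomial.irreducible_X.isUnit_or_isUnit he with hu | hu
    · exfalso
      apply hcase
      rw [hh0, hg]
      exact (Ideal.span_singleton_eq_span_singleton.mpr
        ⟨hu.unit, by rw [IsUnit.unit_spec]; exact hd.symm⟩).symm
    · have hJ0span : J 0 = Ideal.span {g * Polynomial.X} := by
        rw [hh0]
        exact Ideal.span_singleton_eq_span_singleton.mpr
          ⟨hu.unit, by rw [IsUnit.unit_spec, hd, he]; ring⟩
      have hβg : β * g ∈ J 0 := hβJ 1 g hgJ1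
      have hdvd2 : g * Polynomial.X ∣ β * g := by
        rwa [hJ0span, Ideal.mem_span_singleton] at hβg
      have hXβ : Polynomial.X ∣ β := by
        apply (mul_dvd_mul_iff_left hg0).mp
        rwa [mul_comm β g] at hdvd2
      refine ⟨g, Or.inr ⟨hXβ, ?_⟩⟩
      apply le_antisymm
      · intro f hf
        have hdivX : Polynomial.C g ∣ f.divX := by
          rw [Polynomial.C_dvd_iff_dvd_coeff]
          intro i
          have h2 := hJle1 (i+1) (hcoeffJ f hf (i+1))
          rw [hg, Ideal.mem_span_singleton] at h2
          rwa [Polynomial.coeff_divX]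
        obtain ⟨q, hq⟩ := hdivX
        have h0dvd : g * Polynomial.X ∣ f.coeff 0 := by
          have h2 := hcoeffJ f hf 0
          rwa [hJ0span, Ideal.mem_span_singleton] at h2
        obtain ⟨e0, he0⟩ := h0dvd
        rw [mem_Sg]
        refine ⟨q, Polynomial.C e0, ?_⟩
        conv_rhs => rw [← Polynomial.X_mul_divX_add f]
        rw [hq, he0]
        simp only [xP, yP, map_mul]
        ring
      · rw [Sg]
        apply sup_le
        · intro p hp
          rw [LinearMap.mem_range] at hp
          obtain ⟨q, rfl⟩ := hp
          rw [mulOp_apply]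
          have hm : (Polynomial.monomial 1 g : P2) ∈ F := (hJmem 1 g).mp hgJ1
          rw [show xP * Polynomial.C g = Polynomial.monomial 1 g by
            simp only [xP]; rw [← Polynomial.C_mul_X_pow_eq_monomial, pow_one, mul_comm]]
          rw [mul_comm]
          exact hmulF q _ hm
        · intro p hp
          rw [LinearMap.mem_range] at hp
          obtain ⟨q, rfl⟩ := hp
          rw [mulOp_apply]
          have hm : (Polynomial.monomial 0 (Polynomial.X * g) : P2) ∈ F := (hJmem 0 _).mp hXg
          rw [show yP * Polynomial.C g = Polynomial.monomial 0 (Polynomial.X * g) by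
            simp only [yP]; rw [Polynomial.monomial_zero_left, ← map_mul]]
          rw [mul_comm]
          exact hmulF q _ hm

end Stmt12Aux

/-- The submodules of the Heisenberg-Virasoro module `Ψ_hv(λ,β)` are
exactly the subspaces `R_g^hv = g(y)ℂ[x,y]` if `β(0) ≠ 0`, and exactly the subspaces
`R_g^hv` and `S_g^hv = g(y)(xℂ[x,y]+yℂ[x,y])` if `β(0) = 0`; in all cases
`S_g^hv ⊆ R_g^hv ⊆ R_ĝ^hv` whenever `ĝ ∣ g`. -/
theorem statement12 (lam : ℂ) (hlam : lam ≠ 0) (β : Polynomial ℂ) :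
    (β.eval 0 ≠ 0 →
      ∀ F : Submodule ℂ P2, IsHvSub lam β F ↔ ∃ g : Polynomial ℂ, F = Rg g) ∧
    (β.eval 0 = 0 →
      ∀ F : Submodule ℂ P2,
        IsHvSub lam β F ↔ ∃ g : Polynomial ℂ, F = Rg g ∨ F = Sg g) ∧
    (∀ g ghat : Polynomial ℂ, ghat ∣ g → Sg g ≤ Rg g ∧ Rg g ≤ Rg ghat) := by
  open Stmt12Aux in
  refine ⟨?_, ?_, ?_⟩
  · intro hβ0 F
    constructor
    · intro hF
      obtain ⟨g, hg | ⟨hXβ, _⟩⟩ := classify lam hlam β F hF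
      · exact ⟨g, hg⟩
      · exact absurd (by rw [← Polynomial.coeff_zero_eq_eval_zero]
                         exact Polynomial.X_dvd_iff.mp hXβ) hβ0
    · rintro ⟨g, rfl⟩
      exact Rg_hvSub lam β g
  · intro hβ0 F
    constructor
    · intro hF
      obtain ⟨g, hg | ⟨_, hg⟩⟩ := classify lam hlam β F hF
      exacts [⟨g, Or.inl hg⟩, ⟨g, Or.inr hg⟩]
    · rintro ⟨g, rfl | rfl⟩
      · exact Rg_hvSub lam β g
      · refine Sg_hvSub lam β g (Polynomial.X_dvd_iff.mpr ?_)
        rw [Polynomial.coeff_zero_eq_eval_zero]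
        exact hβ0
  · intro g ghat hdvd
    constructor
    · intro p hp
      obtain ⟨a, b, rfl⟩ := mem_Sg.mp hp
      rw [mem_Rg]
      exact dvd_add (dvd_mul_of_dvd_left (dvd_mul_left _ _) _)
        (dvd_mul_of_dvd_left (dvd_mul_left _ _) _)
    · intro p hp
      rw [mem_Rg] at hp ⊢
      exact dvd_trans (map_dvd (Polynomial.C : Polynomial ℂ →+* P2) hdvd) hp
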